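/- The vector ρ₁₁ := 3e_L + e_3 + e_4 + e_5 + 2e_{12} lies in Γ^∨, spans an extremal ray of Γ^∨, and satisfies ⟨K, ρ₁₁⟩ = −4; hence ρ₁₁ is a coextremal ray of M̄_{0,6}. -/
import Mathlib


noncomputable section

/-- Index in `Fin 16` of the exceptional class `E_{ab}` attached to a pair of points
(points written `0`-based as elements of `Fin 5`, assuming `a < b`):
`(0,1) ↦ 6, (0,2) ↦ 7, …, (3,4) ↦ 15`. -/
def pairIdx : ℕ → ℕ → Fin 16
  | 0, 1 => 6
  | 0, 2 => 7
  | 0, 3 => 8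
  | 0, 4 => 9
  | 1, 2 => 10
  | 1, 3 => 11
  | 1, 4 => 12
  | 2, 3 => 13
  | 2, 4 => 14
  | 3, 4 => 15
  | _, _ => 0

/-- The coordinate vector `e_L` (the class `L`). -/
def eL : Fin 16 → ℝ := Pi.single 0 1

/-- The coordinate vector `e_i` for the point `i ∈ {1,…,5}` (represented `0`-based
by `i : Fin 5`). -/
def eP (i : Fin 5) : Fin 16 → ℝ := Pi.single ⟨i.val + 1, by omega⟩ 1

/-- The coordinate vector `e_{ab}` for a 2-element subset `{a,b} ⊂ {1,…,5}`
(represented `0`-based); symmetric in `a` and `b`. -/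
def eE (a b : Fin 5) : Fin 16 → ℝ :=
  Pi.single (if a.val < b.val then pairIdx a.val b.val else pairIdx b.val a.val) 1

/-- The standard inner product on `ℝ¹⁶`. -/
def ip (x y : Fin 16 → ℝ) : ℝ := ∑ i, x i * y i

def Distinct3 (k l m : Fin 5) : Prop := k ≠ l ∧ k ≠ m ∧ l ≠ m

def Distinct5 (i j k l m : Fin 5) : Prop :=
  i ≠ j ∧ i ≠ k ∧ i ≠ l ∧ i ≠ m ∧ j ≠ k ∧ j ≠ l ∧ j ≠ m ∧ k ≠ l ∧ k ≠ m ∧ l ≠ m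

/-- The 40 classes: 25 boundary divisors and 15 fixed-point divisors `F_σ` of `M̄₀₆`. -/
def Gamma : Set (Fin 16 → ℝ) :=
  {v | (∃ i : Fin 5, v = eP i) ∨
       (∃ a b : Fin 5, a ≠ b ∧ v = eE a b) ∨
       (∃ k l m : Fin 5, Distinct3 k l m ∧
          v = eL - eP k - eP l - eP m - eE k l - eE k m - eE l m) ∨
       (∃ j a b c d : Fin 5, Distinct5 j a b c d ∧
          v = (2 : ℝ) • eL - (∑ i, eP i) - eE a c - eE a d - eE b c - eE b d)}

/-- The dual cone `Γ^∨ = {v : ⟨g,v⟩ ≥ 0 for all g ∈ Γ}`. -/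
def GammaDual : Set (Fin 16 → ℝ) := {v | ∀ gv ∈ Gamma, 0 ≤ ip gv v}
/-- The canonical class `K = -4e_L + 2(e_1 + ⋯ + e_5) + Σ_{{a,b}} e_{ab}` of `M̄₀₆`. -/
def Kcl : Fin 16 → ℝ :=
  -((4 : ℝ) • eL) + (2 : ℝ) • (∑ i, eP i) +
    ∑ a : Fin 5, ∑ b : Fin 5, if a < b then eE a b else 0

/-- A nonzero `ρ` spans an extremal ray of the convex cone `C` if `ρ ∈ C` and
whenever `v₁, v₂ ∈ C` with `v₁ + v₂ ∈ ℝ₊·ρ`, both `v₁` and `v₂` lie in `ℝ₊·ρ`. -/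
def SpansExtremalRay (C : Set (Fin 16 → ℝ)) (ρ : Fin 16 → ℝ) : Prop :=
  ρ ≠ 0 ∧ ρ ∈ C ∧ ∀ v₁ v₂, v₁ ∈ C → v₂ ∈ C →
    (∃ t : ℝ, 0 ≤ t ∧ v₁ + v₂ = t • ρ) →
    ((∃ t : ℝ, 0 ≤ t ∧ v₁ = t • ρ) ∧ (∃ t : ℝ, 0 ≤ t ∧ v₂ = t • ρ))
/-- `ρ₁₁ = 3e_L + e₃ + e₄ + e₅ + 2e₁₂` (indices written `1`-based; here `0`-based in `Fin 5`). -/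
def ρ₁₁ : Fin 16 → ℝ :=
  (3 : ℝ) • eL + eP 2 + eP 3 + eP 4 + (2 : ℝ) • eE 0 1

lemma ip_single (j : Fin 16) (v : Fin 16 → ℝ) : ip (Pi.single j 1) v = v j := by
  simp [ip, Pi.single_apply]

lemma ip_addl (x y v : Fin 16 → ℝ) : ip (x + y) v = ip x v + ip y v := by
  simp [ip, add_mul, Finset.sum_add_distrib]

lemma ip_subl (x y v : Fin 16 → ℝ) : ip (x - y) v = ip x v - ip y v := by
  simp [ip, sub_mul, Finset.sum_sub_distrib]

lemma ip_smull (c : ℝ) (x v : Fin 16 → ℝ) : ip (c • x) v = c * ip x v := by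
  simp [ip, Finset.mul_sum, mul_assoc]

lemma ip_addr (x y v : Fin 16 → ℝ) : ip v (x + y) = ip v x + ip v y := by
  simp [ip, mul_add, Finset.sum_add_distrib]

lemma ip_smulr (c : ℝ) (x v : Fin 16 → ℝ) : ip v (c • x) = c * ip v x := by
  simp only [ip, Pi.smul_apply, smul_eq_mul, Finset.mul_sum]
  exact Finset.sum_congr rfl (fun i _ => by ring)

lemma rho_0 : ρ₁₁ 0 = 3 := by
  simp (config := { decide := true }) only [ρ₁₁, eL, eP, eE, pairIdx, Pi.add_apply, Pi.smul_apply, smul_eq_mul, Pi.single_apply]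
  norm_num

lemma rho_1 : ρ₁₁ 1 = 0 := by
  simp (config := { decide := true }) only [ρ₁₁, eL, eP, eE, pairIdx, Pi.add_apply, Pi.smul_apply, smul_eq_mul, Pi.single_apply]
  norm_num

lemma rho_2 : ρ₁₁ 2 = 0 := by
  simp (config := { decide := true }) only [ρ₁₁, eL, eP, eE, pairIdx, Pi.add_apply, Pi.smul_apply, smul_eq_mul, Pi.single_apply]
  norm_num

lemma rho_3 : ρ₁₁ 3 = 1 := by
  simp (config := { decide := true }) only [ρ₁₁, eL, eP, eE, pairIdx, Pi.add_apply, Pi.smul_apply, smul_eq_mul, Pi.single_apply]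
  norm_num

lemma rho_4 : ρ₁₁ 4 = 1 := by
  simp (config := { decide := true }) only [ρ₁₁, eL, eP, eE, pairIdx, Pi.add_apply, Pi.smul_apply, smul_eq_mul, Pi.single_apply]
  norm_num

lemma rho_5 : ρ₁₁ 5 = 1 := by
  simp (config := { decide := true }) only [ρ₁₁, eL, eP, eE, pairIdx, Pi.add_apply, Pi.smul_apply, smul_eq_mul, Pi.single_apply]
  norm_num

lemma rho_6 : ρ₁₁ 6 = 2 := by
  simp (config := { decide := true }) only [ρ₁₁, eL, eP, eE, pairIdx, Pi.add_apply, Pi.smul_apply, smul_eq_mul, Pi.single_apply]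
  norm_num

lemma rho_7 : ρ₁₁ 7 = 0 := by
  simp (config := { decide := true }) only [ρ₁₁, eL, eP, eE, pairIdx, Pi.add_apply, Pi.smul_apply, smul_eq_mul, Pi.single_apply]
  norm_num

lemma rho_8 : ρ₁₁ 8 = 0 := by
  simp (config := { decide := true }) only [ρ₁₁, eL, eP, eE, pairIdx, Pi.add_apply, Pi.smul_apply, smul_eq_mul, Pi.single_apply]
  norm_num

lemma rho_9 : ρ₁₁ 9 = 0 := by
  simp (config := { decide := true }) only [ρ₁₁, eL, eP, eE, pairIdx, Pi.add_apply, Pi.smul_apply, smul_eq_mul, Pi.single_apply]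
  norm_num

lemma rho_10 : ρ₁₁ 10 = 0 := by
  simp (config := { decide := true }) only [ρ₁₁, eL, eP, eE, pairIdx, Pi.add_apply, Pi.smul_apply, smul_eq_mul, Pi.single_apply]
  norm_num

lemma rho_11 : ρ₁₁ 11 = 0 := by
  simp (config := { decide := true }) only [ρ₁₁, eL, eP, eE, pairIdx, Pi.add_apply, Pi.smul_apply, smul_eq_mul, Pi.single_apply]
  norm_num

lemma rho_12 : ρ₁₁ 12 = 0 := by
  simp (config := { decide := true }) only [ρ₁₁, eL, eP, eE, pairIdx, Pi.add_apply, Pi.smul_apply, smul_eq_mul, Pi.single_apply]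
  norm_num

lemma rho_13 : ρ₁₁ 13 = 0 := by
  simp (config := { decide := true }) only [ρ₁₁, eL, eP, eE, pairIdx, Pi.add_apply, Pi.smul_apply, smul_eq_mul, Pi.single_apply]
  norm_num

lemma rho_14 : ρ₁₁ 14 = 0 := by
  simp (config := { decide := true }) only [ρ₁₁, eL, eP, eE, pairIdx, Pi.add_apply, Pi.smul_apply, smul_eq_mul, Pi.single_apply]
  norm_num

lemma rho_15 : ρ₁₁ 15 = 0 := by
  simp (config := { decide := true }) only [ρ₁₁, eL, eP, eE, pairIdx, Pi.add_apply, Pi.smul_apply, smul_eq_mul, Pi.single_apply]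
  norm_num

lemma ipL : ip eL ρ₁₁ = 3 := by rw [eL, ip_single, rho_0]

lemma ipP (i : Fin 5) : ip (eP i) ρ₁₁ = if i = 0 ∨ i = 1 then 0 else 1 := by
  fin_cases i <;>
    simp (config := { decide := true }) [eP, ip_single, rho_1, rho_2, rho_3, rho_4, rho_5]

lemma ipE (a b : Fin 5) (h : a ≠ b) :
    ip (eE a b) ρ₁₁ = if (a = 0 ∧ b = 1) ∨ (a = 1 ∧ b = 0) then 2 else 0 := by
  fin_cases a <;> fin_cases b <;> first
  | exact absurd rfl h
  |
    simp (config := { decide := true }) [eE, pairIdx, ip_single,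
      rho_6, rho_7, rho_8, rho_9, rho_10, rho_11, rho_12, rho_13, rho_14, rho_15]

lemma ip_negl (x v : Fin 16 → ℝ) : ip (-x) v = -ip x v := by
  simp [ip, Finset.sum_neg_distrib]

lemma ip_zero (v : Fin 16 → ℝ) : ip 0 v = 0 := by simp [ip]

lemma ip_suml {n : ℕ} (f : Fin n → (Fin 16 → ℝ)) (v : Fin 16 → ℝ) :
    ip (∑ i, f i) v = ∑ i, ip (f i) v := by
  simp [ip, Finset.sum_mul]
  rw [Finset.sum_comm]

lemma ipSum : ip (∑ i : Fin 5, eP i) ρ₁₁ = 3 := by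
  rw [ip_suml]
  simp (config := { decide := true }) [Fin.sum_univ_five, ipP]
  norm_num

lemma valfacts : ((0:Fin 5):ℕ) = 0 ∧ ((1:Fin 5):ℕ) = 1 := ⟨rfl, rfl⟩

lemma mem_dual : ρ₁₁ ∈ GammaDual := by
  intro gv hgv
  rcases hgv with ⟨i, rfl⟩ | ⟨a, b, hab, rfl⟩ | ⟨k, l, m, ⟨h1, h2, h3⟩, rfl⟩ |
    ⟨j, a, b, c, d, ⟨hja, hjb, hjc, hjd, hab, hac, had, hbc, hbd, hcd⟩, rfl⟩
  · rw [ipP]; split_ifs <;> norm_num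
  · rw [ipE a b hab]; split_ifs <;> norm_num
  · rw [ip_subl, ip_subl, ip_subl, ip_subl, ip_subl, ip_subl, ipL, ipP, ipP, ipP,
      ipE k l h1, ipE k m h2, ipE l m h3]
    split_ifs
    all_goals try norm_num
    all_goals (exfalso; simp only [Fin.ext_iff] at *; omega)
  · rw [ip_subl, ip_subl, ip_subl, ip_subl, ip_subl, ip_smull, ipL, ipSum,
      ipE a c hac, ipE a d had, ipE b c hbc, ipE b d hbd]
    split_ifs
    all_goals try norm_num
    all_goals (exfalso; simp only [Fin.ext_iff] at *; omega)

lemma eP0_eq : eP 0 = Pi.single (1:Fin 16) 1 := rfl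
lemma eP1_eq : eP 1 = Pi.single (2:Fin 16) 1 := rfl
lemma eP2_eq : eP 2 = Pi.single (3:Fin 16) 1 := rfl
lemma eP3_eq : eP 3 = Pi.single (4:Fin 16) 1 := rfl
lemma eP4_eq : eP 4 = Pi.single (5:Fin 16) 1 := rfl
lemma eE01_eq : eE 0 1 = Pi.single (6:Fin 16) 1 := rfl
lemma eE02_eq : eE 0 2 = Pi.single (7:Fin 16) 1 := rfl
lemma eE03_eq : eE 0 3 = Pi.single (8:Fin 16) 1 := rfl
lemma eE04_eq : eE 0 4 = Pi.single (9:Fin 16) 1 := rfl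
lemma eE12_eq : eE 1 2 = Pi.single (10:Fin 16) 1 := rfl
lemma eE13_eq : eE 1 3 = Pi.single (11:Fin 16) 1 := rfl
lemma eE14_eq : eE 1 4 = Pi.single (12:Fin 16) 1 := rfl
lemma eE23_eq : eE 2 3 = Pi.single (13:Fin 16) 1 := rfl
lemma eE24_eq : eE 2 4 = Pi.single (14:Fin 16) 1 := rfl
lemma eE34_eq : eE 3 4 = Pi.single (15:Fin 16) 1 := rfl
lemma eL_eq : eL = Pi.single (0:Fin 16) 1 := rfl

lemma ipE01r : ip (eE 0 1) ρ₁₁ = 2 := by rw [eE01_eq, ip_single, rho_6]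
lemma ipE02r : ip (eE 0 2) ρ₁₁ = 0 := by rw [eE02_eq, ip_single, rho_7]
lemma ipE03r : ip (eE 0 3) ρ₁₁ = 0 := by rw [eE03_eq, ip_single, rho_8]
lemma ipE04r : ip (eE 0 4) ρ₁₁ = 0 := by rw [eE04_eq, ip_single, rho_9]
lemma ipE12r : ip (eE 1 2) ρ₁₁ = 0 := by rw [eE12_eq, ip_single, rho_10]
lemma ipE13r : ip (eE 1 3) ρ₁₁ = 0 := by rw [eE13_eq, ip_single, rho_11]
lemma ipE14r : ip (eE 1 4) ρ₁₁ = 0 := by rw [eE14_eq, ip_single, rho_12]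
lemma ipE23r : ip (eE 2 3) ρ₁₁ = 0 := by rw [eE23_eq, ip_single, rho_13]
lemma ipE24r : ip (eE 2 4) ρ₁₁ = 0 := by rw [eE24_eq, ip_single, rho_14]
lemma ipE34r : ip (eE 3 4) ρ₁₁ = 0 := by rw [eE34_eq, ip_single, rho_15]

lemma ipDouble : ip (∑ a : Fin 5, ∑ b : Fin 5, if a < b then eE a b else 0) ρ₁₁ = 2 := by
  rw [ip_suml]
  have h : ∀ a : Fin 5, ip (∑ b, if a < b then eE a b else 0) ρ₁₁
      = ∑ b, ip (if a < b then eE a b else 0) ρ₁₁ := fun a => ip_suml _ _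
  simp only [h, apply_ite (fun x => ip x ρ₁₁), ip_zero]
  simp (config := { decide := true }) [Fin.sum_univ_five,
    ipE01r, ipE02r, ipE03r, ipE04r, ipE12r, ipE13r, ipE14r, ipE23r, ipE24r, ipE34r]

lemma ipK : ip Kcl ρ₁₁ = -4 := by
  rw [Kcl, ip_addl, ip_addl, ip_negl, ip_smull, ip_smull, ipL, ipSum, ipDouble]
  norm_num

lemma extremal_aux (v : Fin 16 → ℝ)
    (h1 : ip (eP 0) v = 0) (h2 : ip (eP 1) v = 0) (e02 : ip (eE 0 2) v = 0) (e03 : ip (eE 0 3) v = 0) (e04 : ip (eE 0 4) v = 0) (e12 : ip (eE 1 2) v = 0) (e13 : ip (eE 1 3) v = 0) (e14 : ip (eE 1 4) v = 0) (e23 : ip (eE 2 3) v = 0) (e24 : ip (eE 2 4) v = 0) (e34 : ip (eE 3 4) v = 0) (t012 : ip (eL - eP 0 - eP 1 - eP 2 - eE 0 1 - eE 0 2 - eE 1 2) v = 0) (t013 : ip (eL - eP 0 - eP 1 - eP 3 - eE 0 1 - eE 0 3 - eE 1 3) v = 0) (t014 : ip (eL - eP 0 - eP 1 - eP 4 - eE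 0 1 - eE 0 4 - eE 1 4) v = 0) (t234 : ip (eL - eP 2 - eP 3 - eP 4 - eE 2 3 - eE 2 4 - eE 3 4) v = 0) :
    v = (v 3) • ρ₁₁ := by
  simp only [eL_eq, eP0_eq, eP1_eq, eP2_eq, eP3_eq, eP4_eq, eE01_eq, eE02_eq, eE03_eq, eE04_eq, eE12_eq, eE13_eq, eE14_eq, eE23_eq, eE24_eq, eE34_eq, ip_subl, ip_single] at h1 h2 e02 e03 e04 e12 e13 e14 e23 e24 e34 t012 t013 t014 t234
  have c0 : v 0 = v 3 * ρ₁₁ 0 := by rw [rho_0]; linarith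
  have c1 : v 1 = v 3 * ρ₁₁ 1 := by rw [rho_1]; linarith
  have c2 : v 2 = v 3 * ρ₁₁ 2 := by rw [rho_2]; linarith
  have c3 : v 3 = v 3 * ρ₁₁ 3 := by rw [rho_3]; linarith
  have c4 : v 4 = v 3 * ρ₁₁ 4 := by rw [rho_4]; linarith
  have c5 : v 5 = v 3 * ρ₁₁ 5 := by rw [rho_5]; linarith
  have c6 : v 6 = v 3 * ρ₁₁ 6 := by rw [rho_6]; linarith
  have c7 : v 7 = v 3 * ρ₁₁ 7 := by rw [rho_7]; linarith
  have c8 : v 8 = v 3 * ρ₁₁ 8 := by rw [rho_8]; linarith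
  have c9 : v 9 = v 3 * ρ₁₁ 9 := by rw [rho_9]; linarith
  have c10 : v 10 = v 3 * ρ₁₁ 10 := by rw [rho_10]; linarith
  have c11 : v 11 = v 3 * ρ₁₁ 11 := by rw [rho_11]; linarith
  have c12 : v 12 = v 3 * ρ₁₁ 12 := by rw [rho_12]; linarith
  have c13 : v 13 = v 3 * ρ₁₁ 13 := by rw [rho_13]; linarith
  have c14 : v 14 = v 3 * ρ₁₁ 14 := by rw [rho_14]; linarith
  have c15 : v 15 = v 3 * ρ₁₁ 15 := by rw [rho_15]; linarith
  funext j
  fin_cases j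
  exacts [c0, c1, c2, c3, c4, c5, c6, c7, c8, c9, c10, c11, c12, c13, c14, c15]

theorem rho11_coextremal :
    ρ₁₁ ∈ GammaDual ∧ SpansExtremalRay GammaDual ρ₁₁ ∧ ip Kcl ρ₁₁ = -4 := by
  refine ⟨mem_dual, ⟨?_, mem_dual, ?_⟩, ipK⟩
  · intro h
    have h0 := congrFun h 0
    rw [rho_0] at h0
    norm_num at h0
  · rintro v₁ v₂ hv1 hv2 ⟨t, ht, hsum⟩
    have key : ∀ g, g ∈ Gamma → ip g ρ₁₁ = 0 → ip g v₁ = 0 ∧ ip g v₂ = 0 := by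
      intro g hg hz
      have k1 := hv1 g hg
      have k2 := hv2 g hg
      have k3 : ip g v₁ + ip g v₂ = 0 := by
        rw [← ip_addr, hsum, ip_smulr, hz, mul_zero]
      constructor <;> linarith
    obtain ⟨h1a, h1b⟩ := key (eP 0) (Or.inl ⟨0, rfl⟩) (by rw [eP0_eq, ip_single, rho_1])
    obtain ⟨h2a, h2b⟩ := key (eP 1) (Or.inl ⟨1, rfl⟩) (by rw [eP1_eq, ip_single, rho_2])
    obtain ⟨e02a, e02b⟩ := key (eE 0 2) (Or.inr (Or.inl ⟨0, 2, by decide, rfl⟩)) ipE02r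
    obtain ⟨e03a, e03b⟩ := key (eE 0 3) (Or.inr (Or.inl ⟨0, 3, by decide, rfl⟩)) ipE03r
    obtain ⟨e04a, e04b⟩ := key (eE 0 4) (Or.inr (Or.inl ⟨0, 4, by decide, rfl⟩)) ipE04r
    obtain ⟨e12a, e12b⟩ := key (eE 1 2) (Or.inr (Or.inl ⟨1, 2, by decide, rfl⟩)) ipE12r
    obtain ⟨e13a, e13b⟩ := key (eE 1 3) (Or.inr (Or.inl ⟨1, 3, by decide, rfl⟩)) ipE13r
    obtain ⟨e14a, e14b⟩ := key (eE 1 4) (Or.inr (Or.inl ⟨1, 4, by decide, rfl⟩)) ipE14r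
    obtain ⟨e23a, e23b⟩ := key (eE 2 3) (Or.inr (Or.inl ⟨2, 3, by decide, rfl⟩)) ipE23r
    obtain ⟨e24a, e24b⟩ := key (eE 2 4) (Or.inr (Or.inl ⟨2, 4, by decide, rfl⟩)) ipE24r
    obtain ⟨e34a, e34b⟩ := key (eE 3 4) (Or.inr (Or.inl ⟨3, 4, by decide, rfl⟩)) ipE34r
    obtain ⟨t012a, t012b⟩ := key (eL - eP 0 - eP 1 - eP 2 - eE 0 1 - eE 0 2 - eE 1 2) (Or.inr (Or.inr (Or.inl ⟨0, 1, 2, ⟨by decide, by decide, by decide⟩, rfl⟩)))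
      (by simp only [eL_eq, eP0_eq, eP1_eq, eP2_eq, eE01_eq, eE02_eq, eE12_eq, ip_subl, ip_single, rho_0, rho_1, rho_2, rho_3, rho_6, rho_7, rho_10]; norm_num)
    obtain ⟨t013a, t013b⟩ := key (eL - eP 0 - eP 1 - eP 3 - eE 0 1 - eE 0 3 - eE 1 3) (Or.inr (Or.inr (Or.inl ⟨0, 1, 3, ⟨by decide, by decide, by decide⟩, rfl⟩)))
      (by simp only [eL_eq, eP0_eq, eP1_eq, eP3_eq, eE01_eq, eE03_eq, eE13_eq, ip_subl, ip_single, rho_0, rho_1, rho_2, rho_4, rho_6, rho_8, rho_11]; norm_num)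
    obtain ⟨t014a, t014b⟩ := key (eL - eP 0 - eP 1 - eP 4 - eE 0 1 - eE 0 4 - eE 1 4) (Or.inr (Or.inr (Or.inl ⟨0, 1, 4, ⟨by decide, by decide, by decide⟩, rfl⟩)))
      (by simp only [eL_eq, eP0_eq, eP1_eq, eP4_eq, eE01_eq, eE04_eq, eE14_eq, ip_subl, ip_single, rho_0, rho_1, rho_2, rho_5, rho_6, rho_9, rho_12]; norm_num)
    obtain ⟨t234a, t234b⟩ := key (eL - eP 2 - eP 3 - eP 4 - eE 2 3 - eE 2 4 - eE 3 4) (Or.inr (Or.inr (Or.inl ⟨2, 3, 4, ⟨by decide, by decide, by decide⟩, rfl⟩)))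
      (by simp only [eL_eq, eP2_eq, eP3_eq, eP4_eq, eE23_eq, eE24_eq, eE34_eq, ip_subl, ip_single, rho_0, rho_3, rho_4, rho_5, rho_13, rho_14, rho_15]; norm_num)
    have s1 : 0 ≤ v₁ 3 := by
      have := hv1 (eP 2) (Or.inl ⟨2, rfl⟩)
      rwa [eP2_eq, ip_single] at this
    have s2 : 0 ≤ v₂ 3 := by
      have := hv2 (eP 2) (Or.inl ⟨2, rfl⟩)
      rwa [eP2_eq, ip_single] at this
    exact ⟨⟨v₁ 3, s1, extremal_aux v₁ h1a h2a e02a e03a e04a e12a e13a e14a e23a e24a e34a t012a t013a t014a t234a⟩, ⟨v₂ 3, s2, extremal_aux v₂ h1b h2b e02b e03b e04b e12b e13b e14b e23b e24b e34b t012b t013b t014b t234b⟩⟩
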